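/- Let S be a finite type, let γ ∈ (0,1), let ε ∈ [0,1], let ρ₀ : S → ℝ be a probability mass function, and let (K_m)_{m≥1} and (K'_m)_{m≥1} be sequences of row-stochastic kernels S → S → ℝ such that for every m ≥ 1 and every s ∈ S, D_TV(K_m s, K'_m s) ≤ 1 − ε. Let ρ_m = ρ₀ K_1 ⋯ K_m and ρ'_m = ρ₀ K'_1 ⋯ K'_m (with ρ_0 = ρ'_0 = ρ₀), and define the discounted marginal distributions μ s = (1 − γ) ∑_{m=0}^∞ γ^m · ρ_m s and μ' s = (1 − γ) ∑_{m=0}^∞ γ^m · ρ'_m s. Then D_TV(μ, μ') ≤ (γ / (1 − γ)) · (1 − ε). -/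

import Mathlib

/-- Total variation distance between two probability mass functions on a finite type:
`D_TV(p, q) = (1/2) ∑_s |p s - q s|`. -/
noncomputable def dTV {S : Type*} [Fintype S] (p q : S → ℝ) : ℝ :=
  (1 / 2) * ∑ s, |p s - q s|

/-!
Each step adds at most `1 - ε` to the total variation distance between the two chains:
through the intermediate `ρ'_m K_{m+1}`, `D_TV(ρ_m K, ρ'_m K) ≤ D_TV(ρ_m, ρ'_m)` since a
stochastic kernel is a contraction, and
`D_TV(ρ'_m K, ρ'_m K') ≤ ∑_s ρ'_m(s) D_TV(K s, K' s) ≤ 1 - ε`.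
Hence `D_TV(ρ_m, ρ'_m) ≤ m (1 - ε)`. Total variation is convex, so it passes through the
discounted average, and `∑_m (1 - γ) γ^m m = γ / (1 - γ)`.
-/

open Matrix

section TotalVariation

variable {S T : Type*} [Fintype S] [Fintype T]

lemma dTV_self (p : S → ℝ) : dTV p p = 0 := by
  simp [dTV]

lemma dTV_nonneg (p q : S → ℝ) : 0 ≤ dTV p q := by
  unfold dTV; positivity

lemma dTV_triangle (p q r : S → ℝ) : dTV p r ≤ dTV p q + dTV q r := by
  unfold dTV
  rw [← mul_add, ← Finset.sum_add_distrib]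
  gcongr with s
  exact abs_sub_le _ _ _

lemma dTV_const_mul (c : ℝ) (p q : S → ℝ) :
    dTV (fun s => c * p s) (fun s => c * q s) = |c| * dTV p q := by
  simp only [dTV, ← mul_sub, abs_mul, ← Finset.mul_sum]
  ring

lemma sum_abs_vecMul_le (a : S → ℝ) (B : Matrix S T ℝ) :
    ∑ t, |(a ᵥ* B) t| ≤ ∑ s, |a s| * ∑ t, |B s t| :=
  calc ∑ t, |(a ᵥ* B) t| ≤ ∑ t, ∑ s, |a s| * |B s t| := by
        gcongr with t
        simpa only [vecMul, dotProduct, abs_mul] using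
          Finset.abs_sum_le_sum_abs (fun s => a s * B s t) Finset.univ
    _ = ∑ s, |a s| * ∑ t, |B s t| := by
        rw [Finset.sum_comm]
        simp only [Finset.mul_sum]

lemma dTV_vecMul_le_dTV {K : Matrix S T ℝ} (hK : ∀ s, K s ∈ stdSimplex ℝ T)
    (μ μ' : S → ℝ) :
    dTV (μ ᵥ* K) (μ' ᵥ* K) ≤ dTV μ μ' := by
  have hrow : ∀ s, ∑ t, |K s t| = 1 := fun s => by
    rw [← (hK s).2]
    exact Finset.sum_congr rfl fun t _ => abs_of_nonneg ((hK s).1 t)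
  unfold dTV
  gcongr 1 / 2 * ?_
  calc ∑ t, |(μ ᵥ* K) t - (μ' ᵥ* K) t| = ∑ t, |((μ - μ') ᵥ* K) t| := by
        rw [sub_vecMul]; rfl
    _ ≤ ∑ s, |(μ - μ') s| * ∑ t, |K s t| := sum_abs_vecMul_le _ _
    _ = ∑ s, |μ s - μ' s| := by simp [hrow]

lemma dTV_vecMul_vecMul_le {μ : S → ℝ} (hμ : ∀ s, 0 ≤ μ s) (K K' : Matrix S T ℝ) :
    dTV (μ ᵥ* K) (μ ᵥ* K') ≤ ∑ s, μ s * dTV (K s) (K' s) := by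
  calc dTV (μ ᵥ* K) (μ ᵥ* K') = (1 / 2) * ∑ t, |(μ ᵥ* (K - K')) t| := by
        rw [vecMul_sub]; rfl
    _ ≤ (1 / 2) * ∑ s, |μ s| * ∑ t, |(K - K') s t| := by
        gcongr 1 / 2 * ?_
        exact sum_abs_vecMul_le μ (K - K')
    _ = ∑ s, μ s * dTV (K s) (K' s) := by
        simp only [dTV, abs_of_nonneg (hμ _), Finset.mul_sum, Matrix.sub_apply]
        exact Finset.sum_congr rfl fun s _ => Finset.sum_congr rfl fun t _ => by ring

lemma dTV_vecMul_le_add {K K' : Matrix S T ℝ} (hK : ∀ s, K s ∈ stdSimplex ℝ T) {δ : ℝ}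
    (hKK' : ∀ s, dTV (K s) (K' s) ≤ δ) (μ : S → ℝ) {μ' : S → ℝ}
    (hμ' : μ' ∈ stdSimplex ℝ S) :
    dTV (μ ᵥ* K) (μ' ᵥ* K') ≤ dTV μ μ' + δ :=
  calc dTV (μ ᵥ* K) (μ' ᵥ* K')
        ≤ dTV (μ ᵥ* K) (μ' ᵥ* K) + dTV (μ' ᵥ* K) (μ' ᵥ* K') := dTV_triangle _ _ _
    _ ≤ dTV μ μ' + ∑ s, μ' s * δ := by
        gcongr
        · exact dTV_vecMul_le_dTV hK μ μ'
        · refine (dTV_vecMul_vecMul_le hμ'.1 K K').trans ?_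
          gcongr with s
          exacts [hμ'.1 s, hKK' s]
    _ = dTV μ μ' + δ := by rw [← Finset.sum_mul, hμ'.2, one_mul]

lemma vecMul_mem_stdSimplex {μ : S → ℝ} (hμ : μ ∈ stdSimplex ℝ S) {K : Matrix S T ℝ}
    (hK : ∀ s, K s ∈ stdSimplex ℝ T) : μ ᵥ* K ∈ stdSimplex ℝ T := by
  refine ⟨fun t => Finset.sum_nonneg fun s _ => mul_nonneg (hμ.1 s) ((hK s).1 t), ?_⟩
  simp only [vecMul, dotProduct]
  rw [Finset.sum_comm]
  simp only [← Finset.mul_sum, fun s => (hK s).2, mul_one, hμ.2]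

lemma mem_stdSimplex_of_vecMul_succ {ρ : ℕ → S → ℝ} {K : ℕ → Matrix S S ℝ}
    (h0 : ρ 0 ∈ stdSimplex ℝ S) (hK : ∀ m s, K (m + 1) s ∈ stdSimplex ℝ S)
    (hρ : ∀ m, ρ (m + 1) = ρ m ᵥ* K (m + 1)) (m : ℕ) : ρ m ∈ stdSimplex ℝ S := by
  induction m with
  | zero => exact h0
  | succ m ih => rw [hρ]; exact vecMul_mem_stdSimplex ih (hK m)

lemma dTV_tsum_mul_le {w : ℕ → ℝ} (hw : ∀ m, 0 ≤ w m) {p q : ℕ → S → ℝ}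
    (hp : ∀ s, Summable fun m => w m * p m s) (hq : ∀ s, Summable fun m => w m * q m s) :
    dTV (fun s => ∑' m, w m * p m s) (fun s => ∑' m, w m * q m s) ≤
      ∑' m, w m * dTV (p m) (q m) := by
  have habs : ∀ s, Summable fun m => ‖w m * p m s - w m * q m s‖ :=
    fun s => ((hp s).sub (hq s)).norm
  calc dTV (fun s => ∑' m, w m * p m s) (fun s => ∑' m, w m * q m s)
      = (1 / 2) * ∑ s, ‖∑' m, (w m * p m s - w m * q m s)‖ := by
        simp only [dTV, (hp _).tsum_sub (hq _), Real.norm_eq_abs]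
    _ ≤ (1 / 2) * ∑ s, ∑' m, ‖w m * p m s - w m * q m s‖ := by
        gcongr with s
        exact norm_tsum_le_tsum_norm (habs s)
    _ = ∑' m, w m * dTV (p m) (q m) := by
        rw [← Summable.tsum_finsetSum fun s _ => habs s, ← tsum_mul_left]
        refine tsum_congr fun m => ?_
        simp only [dTV, Real.norm_eq_abs, ← mul_sub, abs_mul, abs_of_nonneg (hw m),
          ← Finset.mul_sum]
        ring

lemma summable_pow_mul_of_mem_stdSimplex {γ : ℝ} (hγ0 : 0 ≤ γ) (hγ1 : γ < 1)
    {p : ℕ → S → ℝ} (hp : ∀ m, p m ∈ stdSimplex ℝ S) (s : S) :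
    Summable fun m => γ ^ m * p m s :=
  (summable_geometric_of_lt_one hγ0 hγ1).of_nonneg_of_le
    (fun m => mul_nonneg (pow_nonneg hγ0 m) ((hp m).1 s))
    fun m => mul_le_of_le_one_right (pow_nonneg hγ0 m) (mem_Icc_of_mem_stdSimplex (hp m) s).2

lemma dTV_discounted_le {γ : ℝ} (hγ0 : 0 ≤ γ) (hγ1 : γ < 1) {p q : ℕ → S → ℝ}
    (hp : ∀ m, p m ∈ stdSimplex ℝ S) (hq : ∀ m, q m ∈ stdSimplex ℝ S) :
    dTV (fun s => (1 - γ) * ∑' m, γ ^ m * p m s)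
        (fun s => (1 - γ) * ∑' m, γ ^ m * q m s) ≤
      (1 - γ) * ∑' m, γ ^ m * dTV (p m) (q m) := by
  rw [dTV_const_mul, abs_of_pos (sub_pos.2 hγ1)]
  gcongr
  exact dTV_tsum_mul_le (fun m => pow_nonneg hγ0 m)
    (summable_pow_mul_of_mem_stdSimplex hγ0 hγ1 hp)
    (summable_pow_mul_of_mem_stdSimplex hγ0 hγ1 hq)

end TotalVariation

lemma le_natCast_mul_of_le_add {d : ℕ → ℝ} {δ : ℝ} (h0 : d 0 ≤ 0)
    (h : ∀ m, d (m + 1) ≤ d m + δ) (m : ℕ) : d m ≤ m * δ := by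
  induction m with
  | zero => simpa using h0
  | succ m ih => push_cast; linarith [h m]

lemma hasSum_pow_mul_natCast_mul {γ : ℝ} (hγ0 : 0 ≤ γ) (hγ1 : γ < 1) (δ : ℝ) :
    HasSum (fun m : ℕ => γ ^ m * (m * δ)) (δ * (γ / (1 - γ) ^ 2)) := by
  have h := (hasSum_coe_mul_geometric_of_norm_lt_one (r := γ)
    (by rwa [Real.norm_of_nonneg hγ0])).mul_left δ
  refine (funext fun m => ?_ : (fun m : ℕ => γ ^ m * (m * δ)) = _) ▸ h
  ring

lemma tsum_pow_mul_le_of_le_natCast_mul {γ : ℝ} (hγ0 : 0 ≤ γ) (hγ1 : γ < 1)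
    {d : ℕ → ℝ} {δ : ℝ} (hd0 : ∀ m, 0 ≤ d m) (hd : ∀ m, d m ≤ m * δ) :
    ∑' m, γ ^ m * d m ≤ δ * (γ / (1 - γ) ^ 2) := by
  have hsum := hasSum_pow_mul_natCast_mul hγ0 hγ1 δ
  have hle : ∀ m, γ ^ m * d m ≤ γ ^ m * (m * δ) := fun m =>
    mul_le_mul_of_nonneg_left (hd m) (pow_nonneg hγ0 m)
  exact hasSum_le hle (hsum.summable.of_nonneg_of_le
    (fun m => mul_nonneg (pow_nonneg hγ0 m) (hd0 m)) hle).hasSum hsum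

theorem dTV_discounted_marginals_le_general
    {S : Type*} [Fintype S]
    (γ ε : ℝ) (hγ : γ ∈ Set.Ioo (0 : ℝ) 1)
    (ρ₀ : S → ℝ) (hρ₀0 : ∀ s, 0 ≤ ρ₀ s) (hρ₀1 : ∑ s, ρ₀ s = 1)
    (K K' : ℕ → S → S → ℝ)
    (hK0 : ∀ m : ℕ, 1 ≤ m → ∀ s t, 0 ≤ K m s t)
    (hK1 : ∀ m : ℕ, 1 ≤ m → ∀ s, ∑ t, K m s t = 1)
    (hK'0 : ∀ m : ℕ, 1 ≤ m → ∀ s t, 0 ≤ K' m s t)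
    (hK'1 : ∀ m : ℕ, 1 ≤ m → ∀ s, ∑ t, K' m s t = 1)
    (hTV : ∀ m : ℕ, 1 ≤ m → ∀ s, dTV (K m s) (K' m s) ≤ 1 - ε)
    (ρ ρ' : ℕ → S → ℝ)
    (hρ0 : ρ 0 = ρ₀) (hρ'0 : ρ' 0 = ρ₀)
    (hρ : ∀ m : ℕ, ∀ t, ρ (m + 1) t = ∑ s, ρ m s * K (m + 1) s t)
    (hρ' : ∀ m : ℕ, ∀ t, ρ' (m + 1) t = ∑ s, ρ' m s * K' (m + 1) s t) :
    dTV (fun s => (1 - γ) * ∑' m : ℕ, γ ^ m * ρ m s)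
        (fun s => (1 - γ) * ∑' m : ℕ, γ ^ m * ρ' m s) ≤
      γ / (1 - γ) * (1 - ε) := by
  have hγ0 : 0 ≤ γ := hγ.1.le
  have hKs : ∀ m s, K (m + 1) s ∈ stdSimplex ℝ S := fun m s =>
    ⟨hK0 (m + 1) (Nat.le_add_left 1 m) s, hK1 (m + 1) (Nat.le_add_left 1 m) s⟩
  have hK's : ∀ m s, K' (m + 1) s ∈ stdSimplex ℝ S := fun m s =>
    ⟨hK'0 (m + 1) (Nat.le_add_left 1 m) s, hK'1 (m + 1) (Nat.le_add_left 1 m) s⟩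
  have hρ_succ : ∀ m, ρ (m + 1) = ρ m ᵥ* K (m + 1) := fun m => funext (hρ m)
  have hρ'_succ : ∀ m, ρ' (m + 1) = ρ' m ᵥ* K' (m + 1) := fun m => funext (hρ' m)
  have hρS := mem_stdSimplex_of_vecMul_succ (hρ0 ▸ ⟨hρ₀0, hρ₀1⟩) hKs hρ_succ
  have hρ'S := mem_stdSimplex_of_vecMul_succ (hρ'0 ▸ ⟨hρ₀0, hρ₀1⟩) hK's hρ'_succ
  have hlinear : ∀ m, dTV (ρ m) (ρ' m) ≤ m * (1 - ε) :=
    le_natCast_mul_of_le_add (by rw [hρ0, hρ'0, dTV_self]) fun m => by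
      rw [hρ_succ, hρ'_succ]
      exact dTV_vecMul_le_add (hKs m) (hTV (m + 1) (Nat.le_add_left 1 m)) (ρ m) (hρ'S m)
  calc _ ≤ (1 - γ) * ∑' m, γ ^ m * dTV (ρ m) (ρ' m) :=
        dTV_discounted_le hγ0 hγ.2 hρS hρ'S
    _ ≤ (1 - γ) * ((1 - ε) * (γ / (1 - γ) ^ 2)) := by
        gcongr
        · linarith [hγ.2]
        · exact tsum_pow_mul_le_of_le_natCast_mul hγ0 hγ.2 (fun m => dTV_nonneg _ _) hlinear
    _ = γ / (1 - γ) * (1 - ε) := by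
        field_simp [(sub_pos.2 hγ.2).ne']

/-- if two Markov chains start from the same initial distribution `ρ₀`
and at every step `m ≥ 1` the row-stochastic kernels `K_m` and `K'_m` are within
total variation `1 - ε` at every state, then the discounted marginal state
distributions `μ s = (1-γ) ∑_{m≥0} γ^m ρ_m s` and `μ' s = (1-γ) ∑_{m≥0} γ^m ρ'_m s`
satisfy `D_TV(μ, μ') ≤ γ/(1-γ) · (1-ε)`. -/
theorem dTV_discounted_marginals_le
    {S : Type*} [Fintype S]
    (γ ε : ℝ) (hγ : γ ∈ Set.Ioo (0 : ℝ) 1) (hε : ε ∈ Set.Icc (0 : ℝ) 1)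
    (ρ₀ : S → ℝ) (hρ₀0 : ∀ s, 0 ≤ ρ₀ s) (hρ₀1 : ∑ s, ρ₀ s = 1)
    (K K' : ℕ → S → S → ℝ)
    (hK0 : ∀ m : ℕ, 1 ≤ m → ∀ s t, 0 ≤ K m s t)
    (hK1 : ∀ m : ℕ, 1 ≤ m → ∀ s, ∑ t, K m s t = 1)
    (hK'0 : ∀ m : ℕ, 1 ≤ m → ∀ s t, 0 ≤ K' m s t)
    (hK'1 : ∀ m : ℕ, 1 ≤ m → ∀ s, ∑ t, K' m s t = 1)
    (hTV : ∀ m : ℕ, 1 ≤ m → ∀ s, dTV (K m s) (K' m s) ≤ 1 - ε)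
    (ρ ρ' : ℕ → S → ℝ)
    (hρ0 : ρ 0 = ρ₀) (hρ'0 : ρ' 0 = ρ₀)
    (hρ : ∀ m : ℕ, ∀ t, ρ (m + 1) t = ∑ s, ρ m s * K (m + 1) s t)
    (hρ' : ∀ m : ℕ, ∀ t, ρ' (m + 1) t = ∑ s, ρ' m s * K' (m + 1) s t) :
    dTV (fun s => (1 - γ) * ∑' m : ℕ, γ ^ m * ρ m s)
        (fun s => (1 - γ) * ∑' m : ℕ, γ ^ m * ρ' m s) ≤
      γ / (1 - γ) * (1 - ε) :=
  dTV_discounted_marginals_le_general γ ε hγ ρ₀ hρ₀0 hρ₀1 K K' hK0 hK1 hK'0 hK'1 hTV ρ ρ' hρ0 hρ'0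
    hρ hρ'
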